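/- Let N = p·q where p = 2p′+1 and q = 2q′+1 are distinct safe primes (p, q, p′, q′ all odd primes), and let QR(N) denote the subgroup of squares of the unit group (ℤ/Nℤ)ˣ. If u is a unit of ℤ/Nℤ that is a square (i.e., u ∈ QR(N)), then u is a generator of QR(N) — that is, the cyclic subgroup generated by u equals QR(N) — if and only if u − 1 is invertible in ℤ/Nℤ (equivalently, gcd(u − 1, N) = 1). -/

import Mathlib

/-!
By the Chinese remainder theorem `(ℤ/Nℤ)ˣ ≅ (ℤ/pℤ)ˣ × (ℤ/qℤ)ˣ`, and squaring respects this
splitting, so `QR(N) ≅ QR(p) × QR(q)`. Since `(ℤ/pℤ)ˣ` is cyclic of order `2p'`, `QR(p)` has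
prime order `p'`, and likewise `QR(q)` has prime order `q' ≠ p'`. A pair `(a, b)` in a product
of groups of distinct prime orders generates it exactly when `a ≠ 1` and `b ≠ 1`, and in the
fields `ℤ/pℤ`, `ℤ/qℤ` this says that both components of `u - 1` are nonzero, i.e. that
`u - 1` is a unit mod `N`.
-/

section PrimeOrderProduct

variable {G H : Type*} [Group G] [Group H] {A : Subgroup G} {B : Subgroup H}

theorem Subgroup.orderOf_eq_natCard_of_prime (hA : (Nat.card A).Prime) {a : G} (ha : a ∈ A)
    (h1 : a ≠ 1) : orderOf a = Nat.card A :=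
  ((Nat.dvd_prime hA).mp (A.orderOf_dvd_natCard ha)).resolve_left (mt orderOf_eq_one_iff.mp h1)

theorem Subgroup.orderOf_mk_eq_mul_iff (hA : (Nat.card A).Prime) (hB : (Nat.card B).Prime)
    (hAB : Nat.card A ≠ Nat.card B) {a : G} {b : H} (ha : a ∈ A) (hb : b ∈ B) :
    orderOf (a, b) = Nat.card A * Nat.card B ↔ a ≠ 1 ∧ b ≠ 1 := by
  have hA1 := hA.one_lt
  have hB1 := hB.one_lt
  rw [Prod.orderOf_mk]
  by_cases ha1 : a = 1
  · have hb_le : orderOf b ≤ Nat.card B := Nat.le_of_dvd hB.pos (B.orderOf_dvd_natCard hb)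
    simp only [ha1, orderOf_one, Nat.lcm_one_left, ne_eq, not_true_eq_false, false_and,
      iff_false]
    nlinarith
  by_cases hb1 : b = 1
  · have ha_le : orderOf a ≤ Nat.card A := Nat.le_of_dvd hA.pos (A.orderOf_dvd_natCard ha)
    simp only [hb1, orderOf_one, Nat.lcm_one_right, ne_eq, not_true_eq_false, and_false,
      iff_false]
    nlinarith
  rw [A.orderOf_eq_natCard_of_prime hA ha ha1, B.orderOf_eq_natCard_of_prime hB hb hb1,
    ((Nat.coprime_primes hA hB).mpr hAB).lcm_eq_mul]
  exact iff_of_true rfl ⟨ha1, hb1⟩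

theorem Subgroup.zpowers_mk_eq_prod_iff (hA : (Nat.card A).Prime) (hB : (Nat.card B).Prime)
    (hAB : Nat.card A ≠ Nat.card B) {a : G} {b : H} (ha : a ∈ A) (hb : b ∈ B) :
    zpowers (a, b) = A.prod B ↔ a ≠ 1 ∧ b ≠ 1 := by
  have hcard : Nat.card (A.prod B) = Nat.card A * Nat.card B := by
    rw [Nat.card_congr (A.prodEquiv B).toEquiv, Nat.card_prod]
  have : Finite (A.prod B) := Nat.finite_of_card_ne_zero (by
    rw [hcard]; exact mul_ne_zero hA.ne_zero hB.ne_zero)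
  rw [← orderOf_mk_eq_mul_iff hA hB hAB ha hb, ← Nat.card_zpowers, ← hcard]
  exact ⟨fun h => h ▸ rfl, fun h => eq_of_le_of_card_ge (zpowers_le.mpr ⟨ha, hb⟩) h.ge⟩

end PrimeOrderProduct

theorem range_powMonoidHom_prod {G H : Type*} [CommGroup G] [CommGroup H] (n : ℕ) :
    (powMonoidHom n : G × H →* G × H).range =
      (powMonoidHom n : G →* G).range.prod (powMonoidHom n : H →* H).range := by
  rw [← MonoidHom.range_prodMap]
  rfl

theorem ZMod.card_range_powMonoidHom_two_units {p p' : ℕ} [Fact p.Prime]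
    (hpe : p = 2 * p' + 1) :
    Nat.card (powMonoidHom 2 : (ZMod p)ˣ →* (ZMod p)ˣ).range = p' := by
  rw [IsCyclic.card_powMonoidHom_range, Nat.card_eq_fintype_card, ZMod.card_units, hpe]
  simp

namespace ZMod

variable {m n : ℕ}

def unitsChineseRemainder (h : m.Coprime n) : (ZMod (m * n))ˣ ≃* (ZMod m)ˣ × (ZMod n)ˣ :=
  (Units.mapEquiv (chineseRemainder h).toMulEquiv).trans MulEquiv.prodUnits

theorem isUnit_iff_chineseRemainder (h : m.Coprime n) (x : ZMod (m * n)) :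
    IsUnit x ↔ IsUnit (chineseRemainder h x).1 ∧ IsUnit (chineseRemainder h x).2 := by
  rw [← Prod.isUnit_iff, isUnit_map_iff]

theorem isUnit_sub_one_iff_unitsChineseRemainder (h : m.Coprime n) (u : (ZMod (m * n))ˣ) :
    IsUnit ((u : ZMod (m * n)) - 1) ↔
      IsUnit (((unitsChineseRemainder h u).1 : ZMod m) - 1) ∧
        IsUnit (((unitsChineseRemainder h u).2 : ZMod n) - 1) := by
  rw [isUnit_iff_chineseRemainder h, map_sub, map_one]
  rfl

end ZMod

theorem Units.isUnit_sub_one_iff {K : Type*} [Field K] (x : Kˣ) :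
    IsUnit ((x : K) - 1) ↔ x ≠ 1 := by
  rw [isUnit_iff_ne_zero, sub_ne_zero, Ne, Units.val_eq_one]

theorem squares_zpowers_eq_range_iff_isUnit_sub_one_general
    (p q p' q' : ℕ) (hp : p.Prime) (hq : q.Prime)
    (hp' : p'.Prime) (hq' : q'.Prime)
    (hpe : p = 2 * p' + 1) (hqe : q = 2 * q' + 1) (hpq : p ≠ q)
    (N : ℕ) (hN : N = p * q)
    (u : (ZMod N)ˣ) (hu : IsSquare u) :
    Subgroup.zpowers u = (powMonoidHom 2 : (ZMod N)ˣ →* (ZMod N)ˣ).range ↔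
      IsUnit ((u : ZMod N) - 1) := by
  subst hN
  have := Fact.mk hp
  have := Fact.mk hq
  let E := ZMod.unitsChineseRemainder ((Nat.coprime_primes hp hq).mpr hpq)
  have hcard_p := ZMod.card_range_powMonoidHom_two_units hpe
  have hcard_q := ZMod.card_range_powMonoidHom_two_units hqe
  have hEu : E u ∈ (powMonoidHom 2 : (ZMod p)ˣ →* _).range.prod (powMonoidHom 2).range := by
    obtain ⟨v, rfl⟩ := hu
    rw [← range_powMonoidHom_prod, ← MulEquiv.map_range_powMonoidHom E]
    exact Subgroup.mem_map_of_mem _ ⟨v, sq v⟩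
  have hE : Function.Injective (Subgroup.map (E : (ZMod (p * q))ˣ →* (ZMod p)ˣ × (ZMod q)ˣ)) :=
    Subgroup.map_injective E.injective
  rw [← hE.eq_iff, MonoidHom.map_zpowers, MulEquiv.map_range_powMonoidHom, range_powMonoidHom_prod,
    ZMod.isUnit_sub_one_iff_unitsChineseRemainder, Units.isUnit_sub_one_iff,
    Units.isUnit_sub_one_iff]
  exact Subgroup.zpowers_mk_eq_prod_iff (hcard_p ▸ hp') (hcard_q ▸ hq')
    (by rw [hcard_p, hcard_q]; omega) hEu.1 hEu.2

/-- Micciancio's lemma: for `N = p * q` a product of two distinct safe primes,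
a quadratic residue `u` generates the group `QR(N)` of squares of `(ZMod N)ˣ`
iff `u - 1` is invertible mod `N`. -/
theorem squares_zpowers_eq_range_iff_isUnit_sub_one
    (p q p' q' : ℕ) (hp : p.Prime) (hq : q.Prime)
    (hp' : p'.Prime) (hq' : q'.Prime) (hop' : Odd p') (hoq' : Odd q')
    (hpe : p = 2 * p' + 1) (hqe : q = 2 * q' + 1) (hpq : p ≠ q)
    (N : ℕ) (hN : N = p * q)
    (u : (ZMod N)ˣ) (hu : IsSquare u) :
    Subgroup.zpowers u = (powMonoidHom 2 : (ZMod N)ˣ →* (ZMod N)ˣ).range ↔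
      IsUnit ((u : ZMod N) - 1) :=
  squares_zpowers_eq_range_iff_isUnit_sub_one_general p q p' q' hp hq hp' hq' hpe hqe hpq N hN u hu
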